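/- arXiv:2312.15513 — 2 statements merged into one kernel-verified Lean document; each statement's English description precedes it below -/
import Mathlib

section
/- We have φ(e^{-9π}) / φ(e^{-π}) = (1 + (2(√3 + 1))^{1/3}) / 3. -/
open Real

/-- Ramanujan's theta function `φ(q) = ∑_{n=-∞}^{∞} q^{n²}`. -/
noncomputable def phi (q : ℝ) : ℝ := ∑' n : ℤ, q ^ (n ^ 2)

/-!
Split `φ(q) = B + D`, where `B` sums over `3 ∣ n`, so that `B = φ(q⁹)`, and `D` over `3 ∤ n`.
The matrix `M = latticeMatrix` is symmetric with `M² = 3`, so `x ↦ Mx` maps `ℤ⁴` bijectively onto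
the lattice `L = {y | My ≡ 0 mod 3}` and triples `|x|²`: thus `φ(q³)⁴ = ∑_{y ∈ L} q^{|y|²}`, and the
same holds for the images `εL` of `L` under the four sign changes `ε = signVectors k`. A check
modulo 3 shows that a vector of `ℤ⁴` lies in exactly one of the `εL` if exactly one of its
coordinates is divisible by 3, in all four if all of them are, and in none otherwise. Summing the
four theta series gives `4 φ(q³)⁴ = 4 B D³ + 4 B⁴`, i.e.
`φ(q³)⁴ = (φ(q) - φ(q⁹))³ φ(q⁹) + φ(q⁹)⁴`.

At `q = e^{-π}` and at `q = e^{-π/3}`, where the modular relation `φ(e^{-π/3}) = √3 φ(e^{-3π})`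
applies, this identity eliminates `φ(e^{-3π})` and leaves `(3x - 1)³ = 2(√3 + 1)` for
`x = φ(e^{-9π}) / φ(e^{-π})`.
-/

open Matrix
open scoped ENNReal

lemma zpow_sq_eq_pow_natAbs_sq (q : ℝ) (n : ℤ) : q ^ (n ^ 2) = q ^ (n.natAbs ^ 2) := by
  rw [← Int.natAbs_sq, ← zpow_natCast]
  push_cast
  rfl

lemma summable_phi {q : ℝ} (hq0 : 0 ≤ q) (hq1 : q < 1) :
    Summable fun n : ℤ => q ^ (n ^ 2) := by
  have hgeom : Summable fun n : ℤ => q ^ n.natAbs := by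
    apply Summable.of_nat_of_neg <;> simpa using summable_geometric_of_lt_one hq0 hq1
  refine hgeom.of_nonneg_of_le (fun _ => zpow_nonneg hq0 _) fun n => ?_
  rw [zpow_sq_eq_pow_natAbs_sq]
  exact pow_le_pow_of_le_one hq0 hq1.le (Nat.le_self_pow two_ne_zero _)

lemma phi_nonneg {q : ℝ} (hq : 0 ≤ q) : 0 ≤ phi q :=
  tsum_nonneg fun _ => zpow_nonneg hq _

lemma phi_pos {q : ℝ} (hq0 : 0 ≤ q) (hq1 : q < 1) : 0 < phi q := by
  have h := (summable_phi hq0 hq1).le_tsum 0 fun _ _ => zpow_nonneg hq0 _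
  rw [zero_pow two_ne_zero, zpow_zero] at h
  exact one_pos.trans_le h

-- Theta series are summed in `ℝ≥0∞`, where they can be rearranged without summability conditions.
noncomputable def thetaTerm (r : ℝ≥0∞) (n : ℤ) : ℝ≥0∞ := r ^ n.natAbs ^ 2

noncomputable def thetaOn (r : ℝ≥0∞) (s : Set ℤ) : ℝ≥0∞ := ∑' n, s.indicator (thetaTerm r) n

lemma ofReal_phi {q : ℝ} (hq0 : 0 ≤ q) (hq1 : q < 1) :
    ENNReal.ofReal (phi q) = ∑' n, thetaTerm (ENNReal.ofReal q) n := by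
  rw [phi, ENNReal.ofReal_tsum_of_nonneg (fun _ => zpow_nonneg hq0 _) (summable_phi hq0 hq1)]
  simp only [zpow_sq_eq_pow_natAbs_sq, ENNReal.ofReal_pow hq0, thetaTerm]

lemma thetaOn_add_thetaOn_compl (r : ℝ≥0∞) (s : Set ℤ) :
    thetaOn r s + thetaOn r sᶜ = ∑' n, thetaTerm r n := by
  rw [thetaOn, thetaOn, ← ENNReal.tsum_add]
  simp only [Set.indicator_self_add_compl_apply]

lemma thetaOn_intCast_eq_zero (r : ℝ≥0∞) {k : ℕ} (hk : k ≠ 0) :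
    thetaOn r {n | (n : ZMod k) = 0} = ∑' m, thetaTerm (r ^ k ^ 2) m := by
  have hinj : Function.Injective fun m : ℤ => (k : ℤ) * m :=
    mul_right_injective₀ (by exact_mod_cast hk)
  rw [thetaOn, ← hinj.tsum_eq]
  · congr 1
    funext m
    simp [thetaTerm, Int.natAbs_mul, mul_pow, pow_mul]
  · refine (Set.support_indicator_subset).trans fun n hn => ?_
    obtain ⟨m, rfl⟩ := (ZMod.intCast_zmod_eq_zero_iff_dvd n k).mp hn
    exact ⟨m, rfl⟩

lemma ENNReal.tsum_fin_pi_prod {α : Type*} {n : ℕ} (f : Fin n → α → ℝ≥0∞) :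
    ∑' x : Fin n → α, ∏ i, f i (x i) = ∏ i, ∑' a, f i a := by
  induction n with
  | zero => simp
  | succ n ih =>
    rw [← (Fin.consEquiv fun _ => α).tsum_eq, ENNReal.tsum_prod']
    simp only [Fin.consEquiv, Equiv.coe_fn_mk, Fin.prod_univ_succ, Fin.cons_zero, Fin.cons_succ,
      ENNReal.tsum_mul_left, ih (fun i => f i.succ), ENNReal.tsum_mul_right]

section Lattice

variable {n : ℕ}

noncomputable def latticeTerm (r : ℝ≥0∞) (y : Fin n → ℤ) : ℝ≥0∞ := ∏ i, thetaTerm r (y i)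

lemma tsum_latticeTerm (r : ℝ≥0∞) :
    ∑' y : Fin n → ℤ, latticeTerm r y = (∑' m, thetaTerm r m) ^ n := by
  simp [latticeTerm, ENNReal.tsum_fin_pi_prod]

lemma tsum_indicator_pi_latticeTerm (r : ℝ≥0∞) (s : Fin n → Set ℤ) :
    ∑' y, (Set.univ.pi s).indicator (latticeTerm r) y = ∏ i, thetaOn r (s i) := by
  simp only [thetaOn, ← ENNReal.tsum_fin_pi_prod]
  congr 1
  funext y
  by_cases hy : y ∈ Set.univ.pi s
  · rw [Set.indicator_of_mem hy, latticeTerm]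
    exact Finset.prod_congr rfl fun i _ => (Set.indicator_of_mem (hy i trivial) _).symm
  · obtain ⟨i, -, hi⟩ := not_forall₂.mp hy
    rw [Set.indicator_of_notMem hy]
    exact (Finset.prod_eq_zero (Finset.mem_univ i) (Set.indicator_of_notMem hi _)).symm

lemma latticeTerm_eq_pow (r : ℝ≥0∞) (y : Fin n → ℤ) :
    latticeTerm r y = r ^ ∑ i, (y i).natAbs ^ 2 :=
  Finset.prod_pow_eq_pow_sum _ _ _

lemma natCast_sum_natAbs_sq (y : Fin n → ℤ) : ((∑ i, (y i).natAbs ^ 2 : ℕ) : ℤ) = y ⬝ᵥ y := by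
  simp [dotProduct, sq]

lemma latticeTerm_mul_of_sq_eq_one (r : ℝ≥0∞) {ε : Fin n → ℤ} (hε : ∀ i, ε i ^ 2 = 1)
    (y : Fin n → ℤ) : latticeTerm r (ε * y) = latticeTerm r y := by
  refine Finset.prod_congr rfl fun i _ => ?_
  have hεi : (ε i).natAbs ^ 2 = 1 := by rw [← Int.natAbs_pow, hε i, Int.natAbs_one]
  simp [thetaTerm, Int.natAbs_mul, mul_pow, hεi]

lemma latticeTerm_mulVec {M : Matrix (Fin n) (Fin n) ℤ} {k : ℕ} (hM : Mᵀ * M = k • 1)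
    (r : ℝ≥0∞) (x : Fin n → ℤ) : latticeTerm r (M *ᵥ x) = latticeTerm (r ^ k) x := by
  have hquad : (M *ᵥ x) ⬝ᵥ (M *ᵥ x) = k * (x ⬝ᵥ x) := by
    rw [dotProduct_mulVec, ← vecMul_transpose, vecMul_vecMul, hM]
    simp [smul_dotProduct, mul_comm]
  have hsum : ∑ i, ((M *ᵥ x) i).natAbs ^ 2 = k * ∑ i, (x i).natAbs ^ 2 := by
    apply @Nat.cast_injective ℤ
    rw [Nat.cast_mul, natCast_sum_natAbs_sq, natCast_sum_natAbs_sq, hquad]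
  rw [latticeTerm_eq_pow, latticeTerm_eq_pow, hsum, pow_mul]

lemma mulVec_mulVec_of_mul_self {M : Matrix (Fin n) (Fin n) ℤ} {k : ℕ} (hM : M * M = k • 1)
    (x : Fin n → ℤ) : M *ᵥ (M *ᵥ x) = k • x := by
  rw [mulVec_mulVec, hM, smul_mulVec, one_mulVec]

lemma mulVec_injective_of_mul_self {M : Matrix (Fin n) (Fin n) ℤ} {k : ℕ} (hk : k ≠ 0)
    (hM : M * M = k • 1) : Function.Injective (M *ᵥ ·) := fun x x' h => by
  have h' := congrArg (M *ᵥ ·) h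
  simp only [mulVec_mulVec_of_mul_self hM] at h'
  exact smul_right_injective _ hk h'

lemma range_mulVec_of_mul_self {M : Matrix (Fin n) (Fin n) ℤ} {k : ℕ} (hk : k ≠ 0)
    (hM : M * M = k • 1) : Set.range (M *ᵥ ·) = {y | ∀ i, (k : ℤ) ∣ (M *ᵥ y) i} := by
  ext y
  constructor
  · rintro ⟨x, rfl⟩ i
    simp [mulVec_mulVec_of_mul_self hM]
  · intro hy
    choose x hx using hy
    refine ⟨x, smul_right_injective _ hk ?_⟩
    change k • (M *ᵥ x) = k • y
    rw [← mulVec_smul, ← mulVec_mulVec_of_mul_self hM y]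
    congr 1
    ext i
    simp [hx]

lemma tsum_indicator_range_mulVec {M : Matrix (Fin n) (Fin n) ℤ} {k : ℕ} (hk : k ≠ 0)
    (hMt : Mᵀ = M) (hM : M * M = k • 1) (r : ℝ≥0∞) :
    ∑' y, (Set.range (M *ᵥ ·)).indicator (latticeTerm r) y = (∑' m, thetaTerm (r ^ k) m) ^ n := by
  rw [← (mulVec_injective_of_mul_self hk hM).tsum_eq Set.support_indicator_subset]
  have hMM : Mᵀ * M = k • 1 := by rw [hMt, hM]
  simp only [Set.mem_range_self, Set.indicator_of_mem, latticeTerm_mulVec hMM, tsum_latticeTerm]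

lemma tsum_indicator_preimage_mul {ε : Fin n → ℤ} (hε : ∀ i, ε i ^ 2 = 1) (s : Set (Fin n → ℤ))
    (r : ℝ≥0∞) :
    ∑' y, ((ε * ·) ⁻¹' s).indicator (latticeTerm r) y = ∑' y, s.indicator (latticeTerm r) y := by
  have hinv : Function.Involutive (ε * ·) := fun y => by
    ext i
    simp [← mul_assoc, ← sq, hε]
  rw [← (hinv.toPerm _).tsum_eq (s.indicator _)]
  refine tsum_congr fun y => ?_
  rw [Function.Involutive.coe_toPerm, ← Set.indicator_comp_right]
  simp only [Function.comp_def, latticeTerm_mul_of_sq_eq_one r hε]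

end Lattice

def multiplesOfThree : Set ℤ := {n | (n : ZMod 3) = 0}

def latticeMatrix : Matrix (Fin 4) (Fin 4) ℤ :=
  !![1, 1, 1, 0; 1, -1, 0, 1; 1, 0, -1, -1; 0, 1, -1, 1]

def signVectors : Fin 4 → Fin 4 → ℤ :=
  ![![1, 1, 1, 1], ![1, 1, -1, -1], ![1, -1, -1, 1], ![1, -1, 1, -1]]

lemma latticeMatrix_transpose : latticeMatrixᵀ = latticeMatrix := by decide

lemma latticeMatrix_mul_self : latticeMatrix * latticeMatrix = 3 • 1 := by decide

lemma signVectors_sq (k i : Fin 4) : signVectors k i ^ 2 = 1 := by revert k i; decide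

lemma count_signVectors_mod_three (w : Fin 4 → ZMod 3) :
    (∑ k, if latticeMatrix.map (↑) *ᵥ ((↑) ∘ signVectors k * w) = 0 then 1 else 0 : ℕ) =
      (∑ i, if ∀ j, w j = 0 ↔ j = i then 1 else 0) + if w = 0 then 4 else 0 := by
  revert w; decide

lemma mem_range_latticeMatrix_mulVec_iff (y : Fin 4 → ℤ) :
    y ∈ Set.range (latticeMatrix *ᵥ ·) ↔
      latticeMatrix.map (↑) *ᵥ ((↑) ∘ y : Fin 4 → ZMod 3) = 0 := by
  rw [range_mulVec_of_mul_self three_ne_zero latticeMatrix_mul_self, funext_iff]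
  refine forall_congr' fun i => ?_
  have h := RingHom.map_mulVec (Int.castRingHom (ZMod 3)) latticeMatrix y i
  rw [← ZMod.intCast_zmod_eq_zero_iff_dvd]
  exact iff_of_eq (congrArg (· = 0) h)

lemma sum_indicator_preimage_signVectors_mul (f : (Fin 4 → ℤ) → ℝ≥0∞) (y : Fin 4 → ℤ) :
    ∑ k, ((signVectors k * ·) ⁻¹' Set.range (latticeMatrix *ᵥ ·)).indicator f y =
      ∑ i, (Set.univ.pi fun j => if j = i then multiplesOfThree else multiplesOfThreeᶜ).indicator
          f y + 4 * (Set.univ.pi fun _ => multiplesOfThree).indicator f y := by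
  classical
  have h := congrArg (fun c : ℕ => (c : ℝ≥0∞) * f y) (count_signVectors_mod_three ((↑) ∘ y))
  have hsign : ∀ k, ((↑) ∘ (signVectors k * y) : Fin 4 → ZMod 3) =
      (↑) ∘ signVectors k * (↑) ∘ y := fun k => by ext i; simp
  have hbox (i : Fin 4) :
      y ∈ Set.univ.pi (fun j => if j = i then multiplesOfThree else multiplesOfThreeᶜ) ↔
        ∀ j, (y j : ZMod 3) = 0 ↔ j = i := by
    refine forall_congr' fun j => ?_
    by_cases hj : j = i <;> simp [hj, multiplesOfThree]
  have hzero : y ∈ Set.univ.pi (fun _ => multiplesOfThree) ↔ ((↑) ∘ y : Fin 4 → ZMod 3) = 0 := by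
    simp [funext_iff, multiplesOfThree]
  simp only [Nat.cast_sum, Nat.cast_ite, Nat.cast_one, Nat.cast_zero, Nat.cast_add,
    Nat.cast_ofNat, Finset.sum_mul, ite_mul, one_mul, zero_mul, add_mul, Function.comp_apply] at h
  simp only [Set.indicator_apply, Set.mem_preimage, mem_range_latticeMatrix_mulVec_iff, hsign,
    hbox, hzero, mul_ite, mul_zero]
  exact h

lemma tsum_thetaTerm_pow_three_pow_four (r : ℝ≥0∞) :
    (∑' m, thetaTerm (r ^ 3) m) ^ 4 =
      thetaOn r multiplesOfThree * thetaOn r multiplesOfThreeᶜ ^ 3 +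
        thetaOn r multiplesOfThree ^ 4 := by
  have h := congrArg tsum (funext (sum_indicator_preimage_signVectors_mul (latticeTerm r)))
  have hL (k : Fin 4) : ∑' y, ((signVectors k * ·) ⁻¹' Set.range (latticeMatrix *ᵥ ·)).indicator
      (latticeTerm r) y = (∑' m, thetaTerm (r ^ 3) m) ^ 4 := by
    rw [tsum_indicator_preimage_mul (signVectors_sq k), tsum_indicator_range_mulVec three_ne_zero
      latticeMatrix_transpose latticeMatrix_mul_self]
  simp only [Summable.tsum_finsetSum (fun _ _ => ENNReal.summable), ENNReal.tsum_add,
    ENNReal.tsum_mul_left, hL, tsum_indicator_pi_latticeTerm, apply_ite (thetaOn r),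
    Finset.prod_ite, Finset.filter_eq', Finset.filter_ne', Finset.mem_univ, ↓reduceIte,
    Finset.prod_const, Finset.card_singleton, pow_one, Finset.card_erase_of_mem,
    Finset.card_univ, Fintype.card_fin, Nat.add_one_sub_one, Finset.sum_const, nsmul_eq_mul,
    Nat.cast_ofNat, ← mul_add] at h
  exact (ENNReal.mul_right_inj four_ne_zero ENNReal.ofNat_ne_top).mp h

theorem phi_pow_three_pow_four {q : ℝ} (hq0 : 0 ≤ q) (hq1 : q < 1) :
    phi (q ^ 3) ^ 4 = (phi q - phi (q ^ 9)) ^ 3 * phi (q ^ 9) + phi (q ^ 9) ^ 4 := by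
  have hphi {k : ℕ} (hk : k ≠ 0) :
      ∑' n, thetaTerm (ENNReal.ofReal q ^ k) n = ENNReal.ofReal (phi (q ^ k)) := by
    rw [← ENNReal.ofReal_pow hq0, ofReal_phi (by positivity) (pow_lt_one₀ hq0 hq1 hk)]
  have hB : thetaOn (ENNReal.ofReal q) multiplesOfThree = ENNReal.ofReal (phi (q ^ 9)) := by
    rw [multiplesOfThree, thetaOn_intCast_eq_zero _ three_ne_zero]
    exact hphi (by norm_num)
  have hsplit := thetaOn_add_thetaOn_compl (ENNReal.ofReal q) multiplesOfThree
  rw [hB, ← ofReal_phi hq0 hq1] at hsplit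
  obtain ⟨d, hd0, hD⟩ :
      ∃ d, 0 ≤ d ∧ thetaOn (ENNReal.ofReal q) multiplesOfThreeᶜ = ENNReal.ofReal d :=
    ⟨_, ENNReal.toReal_nonneg, (ENNReal.ofReal_toReal
      (ne_top_of_le_ne_top ENNReal.ofReal_ne_top (hsplit ▸ le_add_self))).symm⟩
  have ha := phi_nonneg hq0
  have hb := phi_nonneg (pow_nonneg hq0 3)
  have hc := phi_nonneg (pow_nonneg hq0 9)
  have hd : phi q = phi (q ^ 9) + d := by
    rw [hD, ← ENNReal.ofReal_add hc hd0] at hsplit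
    exact ((ENNReal.ofReal_eq_ofReal_iff (by positivity) ha).mp hsplit).symm
  have h := tsum_thetaTerm_pow_three_pow_four (ENNReal.ofReal q)
  rw [hphi three_ne_zero, hB, hD, ← ENNReal.ofReal_pow hb, ← ENNReal.ofReal_pow hd0,
    ← ENNReal.ofReal_pow hc, ← ENNReal.ofReal_mul hc,
    ← ENNReal.ofReal_add (by positivity) (by positivity),
    ENNReal.ofReal_eq_ofReal_iff (by positivity) (by positivity)] at h
  rw [hd, add_sub_cancel_left, h]
  ring

lemma jacobiTheta_ofReal_mul_I (t : ℝ) :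
    jacobiTheta (t * Complex.I) = phi (rexp (-π * t)) := by
  rw [jacobiTheta, phi, Complex.ofReal_tsum]
  refine tsum_congr fun n => ?_
  rw [Complex.ofReal_zpow, Complex.ofReal_exp, ← Complex.exp_int_mul]
  congr 1
  push_cast
  linear_combination (π * n ^ 2 * t : ℂ) * Complex.I_sq

lemma phi_exp_neg_pi_div {t : ℝ} (ht : 0 < t) :
    phi (rexp (-π / t)) = √t * phi (rexp (-π * t)) := by
  let τ : UpperHalfPlane := ⟨t * Complex.I, by simpa using ht⟩
  have hSτ : ((ModularGroup.S • τ : UpperHalfPlane) : ℂ) = ((1 / t : ℝ) : ℂ) * Complex.I := by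
    rw [UpperHalfPlane.modular_S_smul, UpperHalfPlane.coe_mk]
    refine inv_eq_of_mul_eq_one_left ?_
    have ht' : (t : ℂ) ≠ 0 := by exact_mod_cast ht.ne'
    push_cast
    field_simp
    linear_combination (-t : ℂ) * Complex.I_sq
  have hroot : (-Complex.I * τ) ^ (1 / 2 : ℂ) = (√t : ℂ) := by
    have : -Complex.I * τ = t := by
      change -Complex.I * (t * Complex.I) = t
      linear_combination (-t : ℂ) * Complex.I_sq
    rw [this, Real.sqrt_eq_rpow, Complex.ofReal_cpow ht.le]
    push_cast
    rfl
  have hS := jacobiTheta_S_smul τ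
  rw [hSτ, hroot, jacobiTheta_ofReal_mul_I, show (τ : ℂ) = t * Complex.I from rfl,
    jacobiTheta_ofReal_mul_I] at hS
  rw [div_eq_mul_one_div]
  exact_mod_cast hS

lemma div_eq_of_quartic_relations {a b c : ℝ} (ha : 0 < a)
    (h1 : b ^ 4 = (a - c) ^ 3 * c + c ^ 4) (h2 : a ^ 4 = (√3 * b - b) ^ 3 * b + b ^ 4) :
    c / a = (1 + (2 * (√3 + 1)) ^ ((1 : ℝ) / 3)) / 3 := by
  set s := √3
  set K := (2 * (s + 1)) ^ ((1 : ℝ) / 3)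
  have hs : s ^ 2 = 3 := Real.sq_sqrt (by norm_num)
  have hK : K ^ 3 = 2 * (s + 1) := by
    rw [← Real.rpow_natCast, ← Real.rpow_mul (by positivity)]
    norm_num
  have h1' : 9 * b ^ 4 = a * ((3 * c - a) ^ 3 + a ^ 3) := by linear_combination 9 * h1
  have h2' : a ^ 4 = (6 * s - 9) * b ^ 4 := by linear_combination h2 + (s - 3) * b ^ 4 * hs
  have hcube : a * ((3 * c - a) ^ 3 - (K * a) ^ 3) = 0 := by
    rw [mul_pow, hK]
    linear_combination (-1) * h1' - (2 * s + 3) * h2' - 12 * b ^ 4 * hs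
  have hlin : 3 * c - a = K * a :=
    (Odd.pow_inj (by decide)).mp (sub_eq_zero.mp ((mul_eq_zero.mp hcube).resolve_left ha.ne'))
  rw [div_eq_iff ha.ne']
  linear_combination hlin / 3

theorem stmt_9 :
    phi (Real.exp (-9 * π)) / phi (Real.exp (-π)) =
      (1 + (2 * (Real.sqrt 3 + 1)) ^ ((1 : ℝ) / 3)) / 3 := by
  have hident {x : ℝ} (hx : x < 0) :=
    phi_pow_three_pow_four (Real.exp_pos x).le (Real.exp_lt_one_iff.mpr hx)
  have hπ : -π < 0 := by linarith [pi_pos]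
  have h1 := hident hπ
  have h2 := hident (x := -π / 3) (by linarith)
  simp only [← Real.exp_nat_mul, Nat.cast_ofNat] at h1 h2
  rw [show 3 * -π = -π * 3 by ring, show 9 * -π = -9 * π by ring] at h1
  rw [show 3 * (-π / 3) = -π by ring, show 9 * (-π / 3) = -π * 3 by ring,
    phi_exp_neg_pi_div three_pos] at h2
  exact div_eq_of_quartic_relations (phi_pos (Real.exp_pos _).le (Real.exp_lt_one_iff.mpr hπ)) h1 h2
end

section
/- For every real q with 0 < q < 1, φ²(q) − φ²(q⁵) = 4q · f(q, q⁹) · f(q³, q⁷). -/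
open Real

/-- Ramanujan's general theta function `f(a,b) = ∑_{n=-∞}^{∞} a^{n(n+1)/2} b^{n(n-1)/2}`. -/
noncomputable def ramanujanF (a b : ℝ) : ℝ :=
  ∑' n : ℤ, a ^ (n * (n + 1) / 2) * b ^ (n * (n - 1) / 2)

/- Auxiliary definitions and lemmas for the proof. -/

/-- Restriction of `q^(a²+b²)` to the residue class `2a-b ≡ r (mod 5)`. -/
private noncomputable def Gq (q : ℝ) (r : ℤ) (p : ℤ × ℤ) : ℝ :=
  if (2 * p.1 - p.2) % 5 = r then q ^ (p.1 ^ 2 + p.2 ^ 2) else 0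

private lemma summable_qzpow {q : ℝ} (hq0 : 0 < q) (hq1 : q < 1) (e : ℤ → ℤ)
    (he : ∀ n : ℤ, |n| ≤ e n) : Summable fun n : ℤ => q ^ e n := by
  have hgeo : Summable fun n : ℤ => q ^ (n.natAbs) := by
    apply Summable.of_nat_of_neg <;> simpa using summable_geometric_of_lt_one hq0.le hq1
  refine Summable.of_nonneg_of_le (fun n => zpow_nonneg hq0.le _) (fun n => ?_) hgeo
  calc q ^ e n ≤ q ^ ((n.natAbs : ℤ)) := by
        apply zpow_le_zpow_right_of_le_one₀ hq0 hq1.le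
        rw [← Int.abs_eq_natAbs]; exact he n
    _ = q ^ n.natAbs := zpow_natCast q n.natAbs

private lemma tsum_sq_eq {q : ℝ} (hq0 : 0 < q) (hq1 : q < 1)
    (e₁ e₂ : ℤ → ℤ) (h₁ : ∀ n : ℤ, |n| ≤ e₁ n) (h₂ : ∀ n : ℤ, |n| ≤ e₂ n) :
    (∑' n : ℤ, q ^ e₁ n) * (∑' n : ℤ, q ^ e₂ n) = ∑' p : ℤ × ℤ, q ^ (e₁ p.1 + e₂ p.2) := by
  have hf := summable_qzpow hq0 hq1 e₁ h₁
  have hg := summable_qzpow hq0 hq1 e₂ h₂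
  have hfg : Summable fun p : ℤ × ℤ => q ^ e₁ p.1 * q ^ e₂ p.2 :=
    hf.mul_of_nonneg hg (fun n => zpow_nonneg hq0.le _) (fun n => zpow_nonneg hq0.le _)
  calc (∑' n : ℤ, q ^ e₁ n) * (∑' n : ℤ, q ^ e₂ n)
      = ∑' p : ℤ × ℤ, q ^ e₁ p.1 * q ^ e₂ p.2 := Summable.tsum_mul_tsum hf hg hfg
    _ = ∑' p : ℤ × ℤ, q ^ (e₁ p.1 + e₂ p.2) :=
        tsum_congr fun p => (zpow_add₀ hq0.ne' _ _).symm

/-- General class-counting lemma: if `Φ` bijectively parametrizes the residue class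
`{(a,b) : 2a - b ≡ r (mod 5)}` with norm `E`, then the `E`-sum equals the class sum. -/
private lemma class_eq {q : ℝ} (r : ℤ) (E : ℤ × ℤ → ℤ) (Φ : ℤ × ℤ → ℤ × ℤ)
    (hinj : Function.Injective Φ)
    (hmem : ∀ p, (2 * (Φ p).1 - (Φ p).2) % 5 = r)
    (hnorm : ∀ p, (Φ p).1 ^ 2 + (Φ p).2 ^ 2 = E p)
    (hsurj : ∀ x : ℤ × ℤ, (2 * x.1 - x.2) % 5 = r → x ∈ Set.range Φ) :
    (∑' p : ℤ × ℤ, q ^ E p) = ∑' p : ℤ × ℤ, Gq q r p := by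
  have hsupp : Function.support (Gq q r) ⊆ Set.range Φ := by
    intro x hx
    apply hsurj
    by_contra h
    exact hx (by simp [Gq, if_neg h])
  calc (∑' p : ℤ × ℤ, q ^ E p) = ∑' p : ℤ × ℤ, Gq q r (Φ p) := by
        refine tsum_congr fun p => ?_
        rw [Gq, if_pos (hmem p), hnorm p]
    _ = ∑' p : ℤ × ℤ, Gq q r p := hinj.tsum_eq hsupp

theorem stmt_12 (q : ℝ) (hq0 : 0 < q) (hq1 : q < 1) :
    phi q ^ 2 - phi (q ^ 5) ^ 2 = 4 * q * ramanujanF q (q ^ 9) * ramanujanF (q ^ 3) (q ^ 7) := by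
  have hqne : q ≠ 0 := hq0.ne'
  have hkey : ∀ n : ℤ, 0 ≤ n * (n - 1) := fun n => by
    rcases le_or_gt n 0 with h | h
    · nlinarith [sq_nonneg n]
    · exact mul_nonneg (by linarith) (by omega)
  have habs : ∀ n : ℤ, |n| ≤ n ^ 2 := fun n => by
    rcases abs_cases n with ⟨h, h'⟩ | ⟨h, h'⟩ <;> nlinarith [hkey n, sq_nonneg n]
  have habs5 : ∀ n : ℤ, |n| ≤ 5 * n ^ 2 := fun n => by
    rcases abs_cases n with ⟨h, h'⟩ | ⟨h, h'⟩ <;> nlinarith [hkey n, sq_nonneg n]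
  have habsA : ∀ n : ℤ, |n| ≤ 5 * n ^ 2 - 4 * n := fun n => by
    rcases abs_cases n with ⟨h, h'⟩ | ⟨h, h'⟩ <;> nlinarith [hkey n, sq_nonneg n]
  have habsB : ∀ n : ℤ, |n| ≤ 5 * n ^ 2 - 2 * n := fun n => by
    rcases abs_cases n with ⟨h, h'⟩ | ⟨h, h'⟩ <;> nlinarith [hkey n, sq_nonneg n]
  -- power rewriting helper
  have hpow : ∀ (c : ℕ) (k : ℤ), (q ^ c) ^ k = q ^ ((c : ℤ) * k) := fun c k => by
    rw [← zpow_natCast q c, ← zpow_mul]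
  -- φ(q)² as a double sum
  have hphi1 : phi q ^ 2 = ∑' p : ℤ × ℤ, q ^ (p.1 ^ 2 + p.2 ^ 2) := by
    rw [sq, phi, tsum_sq_eq hq0 hq1 _ _ habs habs]
  -- φ(q⁵)² as a double sum
  have hphi5 : phi (q ^ 5) ^ 2 = ∑' p : ℤ × ℤ, q ^ (5 * p.1 ^ 2 + 5 * p.2 ^ 2) := by
    have h5 : phi (q ^ 5) = ∑' n : ℤ, q ^ (5 * n ^ 2) := by
      rw [phi]
      refine tsum_congr fun n => ?_
      rw [hpow 5 (n ^ 2)]; norm_num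
    rw [sq, h5, tsum_sq_eq hq0 hq1 _ _ habs5 habs5]
  -- Ramanujan f-function expansions
  have hfA : ramanujanF q (q ^ 9) = ∑' n : ℤ, q ^ (5 * n ^ 2 - 4 * n) := by
    rw [ramanujanF]
    refine tsum_congr fun n => ?_
    have d2 : 2 * (n * (n - 1) / 2) = n ^ 2 - n := by
      have h := Int.even_mul_succ_self (n - 1)
      have he : (n - 1) * (n - 1 + 1) = n * (n - 1) := by ring
      rw [he] at h
      rw [Int.mul_ediv_cancel' h.two_dvd]; ring
    have d1 : 2 * (n * (n + 1) / 2) = n ^ 2 + n := by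
      rw [Int.mul_ediv_cancel' (Int.even_mul_succ_self n).two_dvd]; ring
    rw [hpow 9, ← zpow_add₀ hqne]
    congr 1
    push_cast
    linarith
  have hfB : ramanujanF (q ^ 3) (q ^ 7) = ∑' n : ℤ, q ^ (5 * n ^ 2 - 2 * n) := by
    rw [ramanujanF]
    refine tsum_congr fun n => ?_
    have d2 : 2 * (n * (n - 1) / 2) = n ^ 2 - n := by
      have h := Int.even_mul_succ_self (n - 1)
      have he : (n - 1) * (n - 1 + 1) = n * (n - 1) := by ring
      rw [he] at h
      rw [Int.mul_ediv_cancel' h.two_dvd]; ring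
    have d1 : 2 * (n * (n + 1) / 2) = n ^ 2 + n := by
      rw [Int.mul_ediv_cancel' (Int.even_mul_succ_self n).two_dvd]; ring
    rw [hpow 3, hpow 7, ← zpow_add₀ hqne]
    congr 1
    push_cast
    linarith
  -- the product side
  have hprod : q * (ramanujanF q (q ^ 9) * ramanujanF (q ^ 3) (q ^ 7)) =
      ∑' p : ℤ × ℤ, q ^ (5 * p.1 ^ 2 - 4 * p.1 + (5 * p.2 ^ 2 - 2 * p.2) + 1) := by
    rw [hfA, hfB, tsum_sq_eq hq0 hq1 _ _ habsA habsB, ← tsum_mul_left]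
    refine tsum_congr fun p => ?_
    rw [← zpow_one_add₀ hqne]
    congr 1
    ring
  -- summability of the class functions
  have hGsum : ∀ r : ℤ, Summable (Gq q r) := by
    intro r
    have hF : Summable fun p : ℤ × ℤ => q ^ (p.1 ^ 2 + p.2 ^ 2) := by
      have := tsum_sq_eq hq0 hq1 _ _ habs habs  -- just to reuse; summability directly:
      exact (summable_qzpow hq0 hq1 _ habs).mul_of_nonneg (summable_qzpow hq0 hq1 _ habs)
        (fun n => zpow_nonneg hq0.le _) (fun n => zpow_nonneg hq0.le _) |>.congr
        fun p => (zpow_add₀ hqne _ _).symm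
    refine Summable.of_nonneg_of_le (fun p => ?_) (fun p => ?_) hF
    · rw [Gq]; split
      · exact zpow_nonneg hq0.le _
      · exact le_rfl
    · rw [Gq]; split
      · exact le_rfl
      · exact zpow_nonneg hq0.le _
  -- splitting the full sum into the five classes
  have hsplit : (∑' p : ℤ × ℤ, q ^ (p.1 ^ 2 + p.2 ^ 2)) =
      (∑' p, Gq q 0 p) + ((∑' p, Gq q 1 p) + ((∑' p, Gq q 2 p) +
        ((∑' p, Gq q 3 p) + (∑' p, Gq q 4 p)))) := by
    rw [← Summable.tsum_add (hGsum 3) (hGsum 4), ← Summable.tsum_add (hGsum 2) ((hGsum 3).add (hGsum 4)),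
      ← Summable.tsum_add (hGsum 1) ((hGsum 2).add ((hGsum 3).add (hGsum 4))),
      ← Summable.tsum_add (hGsum 0) ((hGsum 1).add ((hGsum 2).add ((hGsum 3).add (hGsum 4))))]
    refine tsum_congr fun p => ?_
    have h5 : (2 * p.1 - p.2) % 5 = 0 ∨ (2 * p.1 - p.2) % 5 = 1 ∨ (2 * p.1 - p.2) % 5 = 2 ∨
        (2 * p.1 - p.2) % 5 = 3 ∨ (2 * p.1 - p.2) % 5 = 4 := by omega
    rcases h5 with h | h | h | h | h <;> simp [Gq, h]
  -- class 0 is φ(q⁵)²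
  have hc0 : (∑' p : ℤ × ℤ, q ^ (5 * p.1 ^ 2 + 5 * p.2 ^ 2)) = ∑' p, Gq q 0 p := by
    refine class_eq 0 _ (fun p => (p.1 + 2 * p.2, 2 * p.1 - p.2)) ?_ ?_ ?_ ?_
    · rintro ⟨a, b⟩ ⟨c, d⟩ h
      simp only [Prod.mk.injEq] at h ⊢
      omega
    · rintro ⟨m, n⟩; dsimp; omega
    · rintro ⟨m, n⟩; dsimp; ring
    · rintro ⟨a, b⟩ h
      dsimp at h
      exact ⟨((a + 2 * b) / 5, (2 * a - b) / 5), by simp only [Prod.mk.injEq]; omega⟩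
  -- classes 1–4 are each q·f(q,q⁹)·f(q³,q⁷)
  have hc1 : (∑' p : ℤ × ℤ, q ^ (5 * p.1 ^ 2 - 4 * p.1 + (5 * p.2 ^ 2 - 2 * p.2) + 1)) =
      ∑' p, Gq q 1 p := by
    refine class_eq 1 _ (fun p => (p.1 - 2 * p.2, 2 * p.1 + p.2 - 1)) ?_ ?_ ?_ ?_
    · rintro ⟨a, b⟩ ⟨c, d⟩ h
      simp only [Prod.mk.injEq] at h ⊢
      omega
    · rintro ⟨m, n⟩; dsimp; omega
    · rintro ⟨m, n⟩; dsimp; ring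
    · rintro ⟨a, b⟩ h
      dsimp at h
      exact ⟨((a + 2 * b + 2) / 5, (b + 1 - 2 * a) / 5), by simp only [Prod.mk.injEq]; omega⟩
  have hc2 : (∑' p : ℤ × ℤ, q ^ (5 * p.1 ^ 2 - 4 * p.1 + (5 * p.2 ^ 2 - 2 * p.2) + 1)) =
      ∑' p, Gq q 2 p := by
    refine class_eq 2 _ (fun p => (1 - 2 * p.1 - p.2, p.1 - 2 * p.2)) ?_ ?_ ?_ ?_
    · rintro ⟨a, b⟩ ⟨c, d⟩ h
      simp only [Prod.mk.injEq] at h ⊢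
      omega
    · rintro ⟨m, n⟩; dsimp; omega
    · rintro ⟨m, n⟩; dsimp; ring
    · rintro ⟨a, b⟩ h
      dsimp at h
      exact ⟨((2 - 2 * a + b) / 5, (1 - a - 2 * b) / 5), by simp only [Prod.mk.injEq]; omega⟩
  have hc3 : (∑' p : ℤ × ℤ, q ^ (5 * p.1 ^ 2 - 4 * p.1 + (5 * p.2 ^ 2 - 2 * p.2) + 1)) =
      ∑' p, Gq q 3 p := by
    refine class_eq 3 _ (fun p => (2 * p.1 + p.2 - 1, 2 * p.2 - p.1)) ?_ ?_ ?_ ?_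
    · rintro ⟨a, b⟩ ⟨c, d⟩ h
      simp only [Prod.mk.injEq] at h ⊢
      omega
    · rintro ⟨m, n⟩; dsimp; omega
    · rintro ⟨m, n⟩; dsimp; ring
    · rintro ⟨a, b⟩ h
      dsimp at h
      exact ⟨((2 * a + 2 - b) / 5, (a + 1 + 2 * b) / 5), by simp only [Prod.mk.injEq]; omega⟩
  have hc4 : (∑' p : ℤ × ℤ, q ^ (5 * p.1 ^ 2 - 4 * p.1 + (5 * p.2 ^ 2 - 2 * p.2) + 1)) =
      ∑' p, Gq q 4 p := by
    refine class_eq 4 _ (fun p => (2 * p.2 - p.1, 1 - 2 * p.1 - p.2)) ?_ ?_ ?_ ?_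
    · rintro ⟨a, b⟩ ⟨c, d⟩ h
      simp only [Prod.mk.injEq] at h ⊢
      omega
    · rintro ⟨m, n⟩; dsimp; omega
    · rintro ⟨m, n⟩; dsimp; ring
    · rintro ⟨a, b⟩ h
      dsimp at h
      exact ⟨((2 - 2 * b - a) / 5, (1 - b + 2 * a) / 5), by simp only [Prod.mk.injEq]; omega⟩
  -- final assembly
  rw [hphi1, hsplit, hphi5, hc0, ← hc1, ← hc2, ← hc3, ← hc4]
  rw [← hprod]
  ring
end
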